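/- arXiv:2111.10883 — 4 statements merged into one kernel-verified Lean document; each statement's English description precedes it below -/
import Mathlib

section
/- Let f, g : 𝔻 → ℂ be analytic with power series f(z) = Σ a_n z^n and g(z) = Σ b_n z^n. If f is subordinate to g (i.e., f = g ∘ φ for some analytic φ : 𝔻 → 𝔻 with φ(0) = 0), then Σ_{n=0}^∞ |a_n| r^n ≤ Σ_{n=0}^∞ |b_n| r^n for all 0 ≤ r ≤ 1/3. -/
open Metric

noncomputable def majorant (a : ℕ → ℂ) (r : ℝ) : ENNReal :=
  ∑' n, (‖a n‖₊ : ENNReal) * (ENNReal.ofReal r) ^ n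

/-!
By Schwarz's lemma `φ = z • ψ` with `‖ψ‖ ≤ 1`, and Bohr's inequality for `ψ` gives
`M_r(φ) ≤ r` for `r ≤ 1/3`. Bohr's inequality in turn follows from Wiener's estimate
`‖e k‖ ≤ 1 - ‖e 0‖²` for the coefficients of a function bounded by `1`, which is the
Schwarz–Pick inequality at `0` applied to the average of `ψ` over the rotations by the `k`-th
roots of unity. The majorant series is submultiplicative under Cauchy products, so
`M_r(φ ^ n) ≤ r ^ n`. Expanding `f = ∑ b n • φ ^ n` (a double series that converges absolutely
near `0` by the same bound) gives `a k = ∑ n, b n • [z ^ k] φ ^ n`, hence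
`M_r(f) ≤ ∑ ‖b n‖ M_r(φ ^ n) ≤ M_r(g)`.
-/

open Set Filter Finset PowerSeries
open scoped ENNReal NNReal

def HasPowerSeriesOnBall (c : ℕ → ℂ) (F : ℂ → ℂ) (δ : ℝ) : Prop :=
  ∀ z ∈ ball (0 : ℂ) δ, HasSum (fun n => c n * z ^ n) (F z)

theorem exists_hasPowerSeriesOnBall {F : ℂ → ℂ} {δ : ℝ} (hF : DifferentiableOn ℂ F (ball 0 δ)) :
    ∃ c, HasPowerSeriesOnBall c F δ := by
  refine ⟨fun n => (n.factorial : ℂ)⁻¹ * iteratedDeriv n F 0, fun z hz => ?_⟩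
  refine (Complex.hasSum_taylorSeries_on_ball hF hz).congr_fun fun n => ?_
  rw [sub_zero, smul_eq_mul, smul_eq_mul]
  ring

theorem hasSum_mul_zero_pow (c : ℕ → ℂ) : HasSum (fun n => c n * 0 ^ n) (c 0) := by
  simpa using hasSum_single (f := fun n => c n * (0 : ℂ) ^ n) 0 fun n hn => by simp [hn]

namespace HasPowerSeriesOnBall

variable {c : ℕ → ℂ} {F G : ℂ → ℂ} {δ : ℝ}

theorem mono (h : HasPowerSeriesOnBall c F δ) {δ' : ℝ} (hδ : δ' ≤ δ) :
    HasPowerSeriesOnBall c F δ' :=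
  fun z hz => h z (ball_subset_ball hδ hz)

theorem coeff_zero (h : HasPowerSeriesOnBall c F δ) (hδ : 0 < δ) : c 0 = F 0 :=
  (hasSum_mul_zero_pow c).unique (h 0 (mem_ball_self hδ))

theorem hasFPowerSeriesOnBall (h : HasPowerSeriesOnBall c F δ) (hδ : 0 < δ) :
    HasFPowerSeriesOnBall F (FormalMultilinearSeries.ofScalars ℂ c) 0 (.ofReal δ) where
  r_le := by
    refine ENNReal.le_of_forall_nnreal_lt fun q hq => ?_
    have hq' : (q : ℂ) ∈ ball (0 : ℂ) δ := by
      simpa [← Metric.eball_ofReal, edist_dist] using hq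
    refine FormalMultilinearSeries.le_radius_of_tendsto _ (l := 0) ?_
    simpa [FormalMultilinearSeries.ofScalars_norm] using
      (h _ hq').summable.tendsto_atTop_zero.norm
  r_pos := ENNReal.ofReal_pos.mpr hδ
  hasSum {y} hy := by
    rw [Metric.eball_ofReal] at hy
    simpa [FormalMultilinearSeries.ofScalars_apply_eq, mul_comm] using h y hy

theorem differentiableOn (h : HasPowerSeriesOnBall c F δ) (hδ : 0 < δ) :
    DifferentiableOn ℂ F (ball 0 δ) := by
  simpa only [Metric.eball_ofReal] using (h.hasFPowerSeriesOnBall hδ).differentiableOn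

theorem hasDerivAt (h : HasPowerSeriesOnBall c F δ) (hδ : 0 < δ) : HasDerivAt F (c 1) 0 := by
  simpa [FormalMultilinearSeries.ofScalars_apply_eq] using
    (h.hasFPowerSeriesOnBall hδ).hasFPowerSeriesAt.hasStrictDerivAt.hasDerivAt

theorem summable_norm_mul_pow (h : HasPowerSeriesOnBall c F δ) {s : ℝ} (hs0 : 0 ≤ s)
    (hs : s < δ) : Summable fun n => ‖c n‖ * s ^ n := by
  lift s to ℝ≥0 using hs0
  have hδ : 0 < δ := s.2.trans_lt hs
  have hlt : (s : ℝ≥0∞) < (FormalMultilinearSeries.ofScalars ℂ c).radius := by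
    refine lt_of_lt_of_le ?_ (h.hasFPowerSeriesOnBall hδ).r_le
    rwa [← ENNReal.ofReal_coe_nnreal, ENNReal.ofReal_lt_ofReal_iff hδ]
  simpa [FormalMultilinearSeries.ofScalars_norm] using
    (FormalMultilinearSeries.ofScalars ℂ c).summable_norm_mul_pow hlt

theorem eq_of_hasPowerSeriesOnBall {d : ℕ → ℂ} {δ' : ℝ} (h : HasPowerSeriesOnBall c F δ)
    (h' : HasPowerSeriesOnBall d F δ') (hδ : 0 < δ) (hδ' : 0 < δ') : c = d :=
  FormalMultilinearSeries.ofScalars_series_injective ℂ ℂ <|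
    (h.hasFPowerSeriesOnBall hδ).hasFPowerSeriesAt.eq_formalMultilinearSeries
      (h'.hasFPowerSeriesOnBall hδ').hasFPowerSeriesAt

theorem dslope (h : HasPowerSeriesOnBall c F δ) :
    HasPowerSeriesOnBall (fun n => c (n + 1)) (dslope F 0) δ := by
  intro z hz
  have hδ : 0 < δ := pos_of_mem_ball hz
  rcases eq_or_ne z 0 with rfl | hz0
  · rw [dslope_same, (h.hasDerivAt hδ).deriv]
    exact hasSum_mul_zero_pow _
  · rw [dslope_of_ne _ hz0, slope_def_field, sub_zero, ← h.coeff_zero hδ]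
    have h1 := ((hasSum_nat_add_iff' 1).mpr (h z hz)).div_const z
    rw [Finset.sum_range_one, pow_zero, mul_one] at h1
    refine h1.congr_fun fun n => ?_
    rw [pow_succ, ← mul_assoc, mul_div_cancel_right₀ _ hz0]

theorem mul {p q : ℂ⟦X⟧} (hF : HasPowerSeriesOnBall (fun n => coeff n p) F δ)
    (hG : HasPowerSeriesOnBall (fun n => coeff n q) G δ) :
    HasPowerSeriesOnBall (fun n => coeff n (p * q)) (fun z => F z * G z) δ := by
  intro z hz
  show HasSum _ (F z * G z)
  have hz' : ‖z‖ < δ := mem_ball_zero_iff.mp hz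
  have hp : Summable fun n => ‖coeff n p * z ^ n‖ := by
    simpa [norm_mul] using hF.summable_norm_mul_pow (norm_nonneg z) hz'
  have hq : Summable fun n => ‖coeff n q * z ^ n‖ := by
    simpa [norm_mul] using hG.summable_norm_mul_pow (norm_nonneg z) hz'
  have hcauchy : ∀ n, ∑ kl ∈ antidiagonal n, coeff kl.1 p * z ^ kl.1 * (coeff kl.2 q * z ^ kl.2)
      = coeff n (p * q) * z ^ n := by
    intro n
    rw [coeff_mul, Finset.sum_mul]
    refine Finset.sum_congr rfl fun kl hkl => ?_
    rw [← mem_antidiagonal.mp hkl, pow_add]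
    ring
  have hsum := (summable_norm_sum_mul_antidiagonal_of_summable_norm hp hq).of_norm
  rw [← (hF z hz).tsum_eq, ← (hG z hz).tsum_eq,
    tsum_mul_tsum_eq_tsum_sum_antidiagonal_of_summable_norm hp hq]
  simp_rw [hcauchy] at hsum ⊢
  exact hsum.hasSum

theorem pow (h : HasPowerSeriesOnBall c F δ) (m : ℕ) :
    HasPowerSeriesOnBall (fun n => coeff n (mk c ^ m)) (fun z => F z ^ m) δ := by
  induction m with
  | zero =>
    intro z _
    simpa using hasSum_single (f := fun n => coeff n (1 : ℂ⟦X⟧) * z ^ n) 0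
      fun n hn => by simp [coeff_one, hn]
  | succ m ih =>
    have hc : HasPowerSeriesOnBall (fun n => coeff n (mk c)) F δ := by
      simpa only [coeff_mk] using h
    simpa only [pow_succ] using ih.mul hc

end HasPowerSeriesOnBall

theorem majorant_eq_tsum_ofReal (c : ℕ → ℂ) {r : ℝ} (hr : 0 ≤ r) :
    majorant c r = ∑' n, ENNReal.ofReal (‖c n‖ * r ^ n) := by
  simp only [majorant, ENNReal.ofReal_mul (norm_nonneg _), ENNReal.ofReal_pow hr, ofReal_norm,
    enorm_eq_nnnorm]

theorem majorant_eq_add_mul_majorant_succ (c : ℕ → ℂ) (r : ℝ) :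
    majorant c r = ‖c 0‖₊ + ENNReal.ofReal r * majorant (fun n => c (n + 1)) r := by
  rw [majorant, tsum_eq_zero_add' ENNReal.summable, majorant, ← ENNReal.tsum_mul_left]
  simp only [pow_zero, mul_one, pow_succ]
  congr 1
  exact tsum_congr fun n => by ring

theorem majorant_le_of_norm_le {c : ℕ → ℂ} {M r : ℝ} (hc : ∀ n, ‖c n‖ ≤ M) (hr0 : 0 ≤ r)
    (hr1 : r < 1) : majorant c r ≤ ENNReal.ofReal (M / (1 - r)) := by
  have hM : 0 ≤ M := (norm_nonneg _).trans (hc 0)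
  have hgeom : HasSum (fun n => M * r ^ n) (M / (1 - r)) := by
    simpa [div_eq_mul_inv] using (hasSum_geometric_of_lt_one hr0 hr1).mul_left M
  rw [majorant_eq_tsum_ofReal c hr0, ← hgeom.tsum_eq,
    ENNReal.ofReal_tsum_of_nonneg (fun n => by positivity) hgeom.summable]
  exact ENNReal.tsum_le_tsum fun n =>
    ENNReal.ofReal_le_ofReal (mul_le_mul_of_nonneg_right (hc n) (by positivity))

theorem HasPowerSeriesOnBall.majorant_lt_top {c : ℕ → ℂ} {F : ℂ → ℂ} {δ s : ℝ}
    (h : HasPowerSeriesOnBall c F δ) (hs0 : 0 ≤ s) (hs : s < δ) : majorant c s < ⊤ := by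
  rw [majorant_eq_tsum_ofReal c hs0, ← ENNReal.ofReal_tsum_of_nonneg (fun n => by positivity)
    (h.summable_norm_mul_pow hs0 hs)]
  exact ENNReal.ofReal_lt_top

theorem majorant_coeff_mul_le (p q : ℂ⟦X⟧) (r : ℝ) :
    majorant (fun n => coeff n (p * q)) r
      ≤ majorant (fun n => coeff n p) r * majorant (fun n => coeff n q) r := by
  set R := ENNReal.ofReal r
  set W : ℕ × ℕ → ℝ≥0∞ := fun kl =>
    (‖coeff kl.1 p‖₊ * R ^ kl.1) * (‖coeff kl.2 q‖₊ * R ^ kl.2)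
  have hterm : ∀ n, (‖coeff n (p * q)‖₊ : ℝ≥0∞) * R ^ n ≤ ∑ kl ∈ antidiagonal n, W kl := by
    intro n
    calc (‖coeff n (p * q)‖₊ : ℝ≥0∞) * R ^ n
        ≤ (∑ kl ∈ antidiagonal n, (‖coeff kl.1 p‖₊ : ℝ≥0∞) * ‖coeff kl.2 q‖₊) * R ^ n := by
          gcongr
          rw [coeff_mul]
          exact_mod_cast (nnnorm_sum_le _ _).trans (Finset.sum_le_sum fun _ _ => nnnorm_mul_le _ _)
      _ = ∑ kl ∈ antidiagonal n, W kl := by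
          rw [Finset.sum_mul]
          refine Finset.sum_congr rfl fun kl hkl => ?_
          rw [← mem_antidiagonal.mp hkl, pow_add]
          ring
  calc majorant (fun n => coeff n (p * q)) r ≤ ∑' n, ∑ kl ∈ antidiagonal n, W kl :=
        ENNReal.tsum_le_tsum hterm
    _ = ∑' kl : ℕ × ℕ, W kl := by
        rw [← HasAntidiagonal.sigmaAntidiagonalEquivProd.tsum_eq W, ENNReal.tsum_sigma']
        exact tsum_congr fun n => (Finset.tsum_subtype (antidiagonal n) W).symm
    _ = majorant (fun n => coeff n p) r * majorant (fun n => coeff n q) r := by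
        rw [ENNReal.tsum_prod', majorant, majorant, ← ENNReal.tsum_mul_right]
        refine tsum_congr fun k => ?_
        rw [← ENNReal.tsum_mul_left]

theorem majorant_coeff_pow_le (p : ℂ⟦X⟧) (m : ℕ) (r : ℝ) :
    majorant (fun n => coeff n (p ^ m)) r ≤ majorant (fun n => coeff n p) r ^ m := by
  induction m with
  | zero =>
    refine le_of_eq ?_
    rw [majorant, tsum_eq_single 0 fun n hn => by simp [coeff_one, hn]]
    simp
  | succ m ih =>
    rw [pow_succ, pow_succ]
    exact (majorant_coeff_mul_le _ _ r).trans (mul_le_mul_left ih _)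

noncomputable def mobius (a w : ℂ) : ℂ := (w - a) / (1 - starRingEnd ℂ a * w)

theorem one_sub_conj_mul_ne_zero {a w : ℂ} (ha : ‖a‖ < 1) (hw : ‖w‖ ≤ 1) :
    1 - starRingEnd ℂ a * w ≠ 0 := by
  intro h
  have hlt : ‖starRingEnd ℂ a * w‖ < 1 := by
    rw [norm_mul, Complex.norm_conj]
    calc ‖a‖ * ‖w‖ ≤ ‖a‖ * 1 := by gcongr
      _ < 1 := by rwa [mul_one]
  rw [← sub_eq_zero.mp h, norm_one] at hlt
  exact hlt.false

theorem norm_mobius_le_one {a w : ℂ} (ha : ‖a‖ < 1) (hw : ‖w‖ ≤ 1) : ‖mobius a w‖ ≤ 1 := by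
  rw [mobius, norm_div, div_le_one (norm_pos_iff.mpr (one_sub_conj_mul_ne_zero ha hw))]
  have hw' : Complex.normSq w ≤ 1 := by
    rw [Complex.normSq_eq_norm_sq]
    nlinarith [norm_nonneg w]
  have ha' : Complex.normSq a ≤ 1 := by
    rw [Complex.normSq_eq_norm_sq]
    nlinarith [norm_nonneg a]
  -- `‖1 - ā w‖² - ‖w - a‖² = (1 - ‖a‖²) (1 - ‖w‖²)`
  rw [Complex.norm_def, Complex.norm_def]
  apply Real.sqrt_le_sqrt
  simp only [Complex.normSq_apply, Complex.sub_re, Complex.sub_im, Complex.mul_re,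
    Complex.mul_im, Complex.conj_re, Complex.conj_im, Complex.one_re, Complex.one_im] at ha' hw' ⊢
  nlinarith [mul_nonneg (sub_nonneg.mpr ha') (sub_nonneg.mpr hw')]

theorem hasDerivAt_mobius {a w : ℂ} (hw : 1 - starRingEnd ℂ a * w ≠ 0) :
    HasDerivAt (mobius a) ((1 - starRingEnd ℂ a * a) / (1 - starRingEnd ℂ a * w) ^ 2) w := by
  refine ((hasDerivAt_id w).sub_const a |>.div ((hasDerivAt_id w).const_mul _ |>.const_sub 1)
    hw).congr_deriv ?_
  simp only [id]
  ring

theorem norm_deriv_le_one_sub_sq {H : ℂ → ℂ} (hH : DifferentiableOn ℂ H (ball 0 1))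
    (hmaps : MapsTo H (ball 0 1) (closedBall 0 1)) : ‖deriv H 0‖ ≤ 1 - ‖H 0‖ ^ 2 := by
  have h0 : (0 : ℂ) ∈ ball (0 : ℂ) 1 := mem_ball_self one_pos
  have hbound : ∀ z ∈ ball (0 : ℂ) 1, ‖H z‖ ≤ 1 := fun z hz => mem_closedBall_zero_iff.mp (hmaps hz)
  generalize hHa : H 0 = a
  rcases (hHa ▸ hbound 0 h0).eq_or_lt with ha | ha
  · -- `‖H‖` attains its maximum at `0`, so `H` is constant
    have hmax : IsMaxOn (norm ∘ H) (ball 0 1) 0 := fun z hz => by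
      simpa [hHa, ha] using hbound z hz
    have hconst := Complex.eqOn_of_isPreconnected_of_isMaxOn_norm
      (convex_ball (0 : ℂ) 1).isPreconnected isOpen_ball hH h0 hmax
    rw [(eventuallyEq_of_mem (isOpen_ball.mem_nhds h0) hconst).deriv_eq, ha]
    have hzero : deriv (Function.const ℂ (H 0)) 0 = 0 := deriv_const 0 (H 0)
    simp [hzero]
  · -- Schwarz's lemma for `mobius a ∘ H`, which fixes `0`
    have hm : DifferentiableOn ℂ (mobius a ∘ H) (ball 0 1) := fun z hz =>
      ((hasDerivAt_mobius (one_sub_conj_mul_ne_zero ha (hbound z hz))).differentiableAt.comp z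
        (hH.differentiableAt (isOpen_ball.mem_nhds hz))).differentiableWithinAt
    have hm_maps : MapsTo (mobius a ∘ H) (ball 0 1) (closedBall ((mobius a ∘ H) 0) 1) := by
      intro z hz
      rw [Function.comp_apply, hHa, mobius, sub_self, zero_div, mem_closedBall_zero_iff]
      exact norm_mobius_le_one ha (hbound z hz)
    have hpos : 0 < 1 - ‖a‖ ^ 2 := by nlinarith [norm_nonneg a]
    have hm' := (hasDerivAt_mobius (one_sub_conj_mul_ne_zero ha ha.le)).comp_of_eq 0
      (hH.differentiableAt (isOpen_ball.mem_nhds h0)).hasDerivAt hHa.symm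
    have hnorm : 1 - starRingEnd ℂ a * a = ((1 - ‖a‖ ^ 2 : ℝ) : ℂ) := by
      rw [mul_comm, Complex.mul_conj, Complex.normSq_eq_norm_sq]
      push_cast
      ring
    have h1 := Complex.norm_deriv_le_one_of_mapsTo_ball hm hm_maps one_pos
    rwa [hm'.deriv, hnorm, norm_mul, norm_div, norm_pow, Complex.norm_real,
      Real.norm_of_nonneg hpos.le, pow_two (1 - ‖a‖ ^ 2), div_mul_cancel_left₀ hpos.ne',
      ← div_eq_inv_mul, div_le_one hpos] at h1

theorem IsPrimitiveRoot.sum_pow_pow_eq {K : Type*} [Field K] {ζ : K} {k : ℕ}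
    (hζ : IsPrimitiveRoot ζ k) (n : ℕ) :
    ∑ j ∈ range k, (ζ ^ n) ^ j = if k ∣ n then (k : K) else 0 := by
  split_ifs with hdvd
  · simp [(hζ.pow_eq_one_iff_dvd n).mpr hdvd]
  · have hne : ζ ^ n ≠ 1 := fun h => hdvd ((hζ.pow_eq_one_iff_dvd n).mp h)
    rw [geom_sum_eq hne, ← pow_mul, mul_comm, pow_mul, hζ.pow_eq_one, one_pow, sub_self, zero_div]

theorem IsPrimitiveRoot.pow_mul_mem_ball {ζ : ℂ} {k : ℕ} (hζ : IsPrimitiveRoot ζ k) (hk : k ≠ 0)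
    (j : ℕ) {z : ℂ} {δ : ℝ} (hz : z ∈ ball 0 δ) : ζ ^ j * z ∈ ball 0 δ := by
  simpa [norm_mul, norm_pow, hζ.norm'_eq_one hk] using hz

namespace HasPowerSeriesOnBall

variable {e : ℕ → ℂ} {ψ : ℂ → ℂ} {δ : ℝ}

theorem hasSum_coeff_mul_of_isPrimitiveRoot (h : HasPowerSeriesOnBall e ψ δ) {k : ℕ}
    (hk : k ≠ 0) {ζ : ℂ} (hζ : IsPrimitiveRoot ζ k) {z : ℂ} (hz : z ∈ ball 0 δ) :
    HasSum (fun m => e (m * k) * (z ^ k) ^ m) ((k : ℂ)⁻¹ * ∑ j ∈ range k, ψ (ζ ^ j * z)) := by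
  have hsum : HasSum (fun n => (if k ∣ n then (k : ℂ) else 0) * (e n * z ^ n))
      (∑ j ∈ range k, ψ (ζ ^ j * z)) := by
    refine (hasSum_sum fun j _ => h _ (hζ.pow_mul_mem_ball hk j hz)).congr_fun fun n => ?_
    rw [← hζ.sum_pow_pow_eq n, Finset.sum_mul]
    refine Finset.sum_congr rfl fun j _ => ?_
    ring
  rw [← (mul_left_injective₀ hk).hasSum_iff fun n hn => by
    rw [if_neg fun hdvd => hn ⟨n / k, Nat.div_mul_cancel hdvd⟩, zero_mul]] at hsum
  refine (hsum.mul_left (k : ℂ)⁻¹).congr_fun fun m => ?_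
  have hkC : (k : ℂ) ≠ 0 := Nat.cast_ne_zero.mpr hk
  simp only [Function.comp_apply, if_pos (dvd_mul_right k m), ← pow_mul, mul_comm m k]
  field_simp

theorem norm_coeff_le_one_sub_sq (h : HasPowerSeriesOnBall e ψ 1)
    (hψ : MapsTo ψ (ball 0 1) (closedBall 0 1)) {k : ℕ} (hk : k ≠ 0) :
    ‖e k‖ ≤ 1 - ‖e 0‖ ^ 2 := by
  obtain ⟨ζ, hζ⟩ : ∃ ζ : ℂ, IsPrimitiveRoot ζ k := ⟨_, Complex.isPrimitiveRoot_exp k hk⟩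
  have hroot : ∀ w ∈ ball (0 : ℂ) 1, ∃ z ∈ ball (0 : ℂ) 1, z ^ k = w := by
    intro w hw
    obtain ⟨z, rfl⟩ := IsAlgClosed.exists_pow_nat_eq w (Nat.pos_of_ne_zero hk)
    refine ⟨z, ?_, rfl⟩
    rw [mem_ball_zero_iff, norm_pow] at hw
    exact mem_ball_zero_iff.mpr ((pow_lt_one_iff_of_nonneg (norm_nonneg z) hk).mp hw)
  -- `G (z ^ k)` is the average of `ψ` over the `k` points `ζ ^ j * z`
  set G : ℂ → ℂ := fun w => ∑' m, e (m * k) * w ^ m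
  have hG : HasPowerSeriesOnBall (fun m => e (m * k)) G 1 := fun w hw => by
    obtain ⟨z, hz, rfl⟩ := hroot w hw
    exact (h.hasSum_coeff_mul_of_isPrimitiveRoot hk hζ hz).summable.hasSum
  have hG_maps : MapsTo G (ball 0 1) (closedBall 0 1) := by
    intro w hw
    obtain ⟨z, hz, rfl⟩ := hroot w hw
    have hk0 : (0 : ℝ) < k := Nat.cast_pos.mpr (Nat.pos_of_ne_zero hk)
    rw [mem_closedBall_zero_iff, show G (z ^ k) = _ from
      (h.hasSum_coeff_mul_of_isPrimitiveRoot hk hζ hz).tsum_eq,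
      norm_mul, norm_inv, Complex.norm_natCast, inv_mul_le_iff₀ hk0, mul_one]
    refine (norm_sum_le _ _).trans ?_
    simpa using Finset.sum_le_sum fun j (_ : j ∈ range k) =>
      mem_closedBall_zero_iff.mp (hψ (hζ.pow_mul_mem_ball hk j hz))
  have := norm_deriv_le_one_sub_sq (hG.differentiableOn one_pos) hG_maps
  rwa [(hG.hasDerivAt one_pos).deriv, ← hG.coeff_zero one_pos, one_mul, zero_mul] at this

theorem majorant_le_one (h : HasPowerSeriesOnBall e ψ 1)
    (hψ : MapsTo ψ (ball 0 1) (closedBall 0 1)) {r : ℝ} (hr0 : 0 ≤ r) (hr : r ≤ 1 / 3) :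
    majorant e r ≤ 1 := by
  set t := ‖e 0‖
  have ht : t ≤ 1 := by
    simpa [t, h.coeff_zero one_pos] using hψ (mem_ball_self one_pos)
  have htail : majorant (fun n => e (n + 1)) r ≤ ENNReal.ofReal ((1 - t ^ 2) / (1 - r)) :=
    majorant_le_of_norm_le (fun n => h.norm_coeff_le_one_sub_sq hψ n.succ_ne_zero) hr0
      (by linarith)
  have h1r : 0 < 1 - r := by linarith
  have h1t : 0 ≤ 1 - t ^ 2 := by nlinarith [norm_nonneg (e 0)]
  have hr_tail : 0 ≤ r * ((1 - t ^ 2) / (1 - r)) := mul_nonneg hr0 (div_nonneg h1t h1r.le)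
  have hkey : t + r * ((1 - t ^ 2) / (1 - r)) ≤ 1 := by
    have : r * ((1 - t ^ 2) / (1 - r)) ≤ (1 - t ^ 2) / 2 := by
      rw [mul_div_assoc', div_le_div_iff₀ h1r two_pos]
      nlinarith [mul_nonneg h1t (by linarith : 0 ≤ 1 - 3 * r)]
    nlinarith [sq_nonneg (1 - t)]
  calc majorant e r = ‖e 0‖₊ + ENNReal.ofReal r * majorant (fun n => e (n + 1)) r :=
        majorant_eq_add_mul_majorant_succ e r
    _ ≤ ENNReal.ofReal t + ENNReal.ofReal r * ENNReal.ofReal ((1 - t ^ 2) / (1 - r)) := by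
        rw [show (‖e 0‖₊ : ℝ≥0∞) = ENNReal.ofReal t by rw [ofReal_norm, enorm_eq_nnnorm]]
        gcongr
    _ = ENNReal.ofReal (t + r * ((1 - t ^ 2) / (1 - r))) := by
        rw [ENNReal.ofReal_add (norm_nonneg _) hr_tail, ENNReal.ofReal_mul hr0]
    _ ≤ 1 := ENNReal.ofReal_le_one.mpr hkey

theorem majorant_le_ofReal_of_map_zero {c : ℕ → ℂ} {φ : ℂ → ℂ} (h : HasPowerSeriesOnBall c φ 1)
    (hφ : MapsTo φ (ball 0 1) (closedBall 0 1)) (hφ0 : φ 0 = 0) {r : ℝ} (hr0 : 0 ≤ r)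
    (hr : r ≤ 1 / 3) : majorant c r ≤ ENNReal.ofReal r := by
  have hψ : MapsTo (_root_.dslope φ 0) (ball 0 1) (closedBall 0 1) := fun z hz => by
    simpa using Complex.norm_dslope_le_div_of_mapsTo_ball (h.differentiableOn one_pos)
      (by rwa [hφ0]) hz
  rw [majorant_eq_add_mul_majorant_succ, h.coeff_zero one_pos, hφ0, nnnorm_zero,
    ENNReal.coe_zero, zero_add]
  calc ENNReal.ofReal r * majorant (fun n => c (n + 1)) r ≤ ENNReal.ofReal r * 1 := by
        gcongr
        exact h.dslope.majorant_le_one hψ hr0 hr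
    _ = ENNReal.ofReal r := mul_one _

end HasPowerSeriesOnBall

theorem HasSum.tsum_fiberwise_swap {E β γ : Type*} [NormedAddCommGroup E] [CompleteSpace E]
    {F : β × γ → E} {g : β → E} {s : E} (hs : HasSum g s) (hF : Summable F)
    (hg : ∀ b, HasSum (fun c => F (b, c)) (g b)) : HasSum (fun c => ∑' b, F (b, c)) s := by
  have hFs : HasSum F s := (hF.hasSum.prod_fiberwise hg).unique hs ▸ hF.hasSum
  exact ((Equiv.prodComm γ β).hasSum_iff.mpr hFs).prod_fiberwise fun c =>
    (hF.prod_symm.prod_factor c).hasSum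

section Subordination

variable {b : ℕ → ℂ} {P : ℕ → ℕ → ℂ} {r : ℝ}

theorem tsum_prod_le_majorant (hP : ∀ n, majorant (P n) r ≤ ENNReal.ofReal r ^ n) :
    ∑' p : ℕ × ℕ, (‖b p.1‖₊ : ℝ≥0∞) * (‖P p.1 p.2‖₊ * ENNReal.ofReal r ^ p.2) ≤ majorant b r := by
  rw [ENNReal.tsum_prod']
  refine ENNReal.tsum_le_tsum fun n => ?_
  dsimp only
  rw [ENNReal.tsum_mul_left]
  gcongr
  exact hP n

theorem majorant_tsum_mul_le (hP : ∀ n, majorant (P n) r ≤ ENNReal.ofReal r ^ n) :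
    majorant (fun k => ∑' n, b n * P n k) r ≤ majorant b r := by
  calc majorant (fun k => ∑' n, b n * P n k) r
      ≤ ∑' k, ∑' n, (‖b n‖₊ : ℝ≥0∞) * (‖P n k‖₊ * ENNReal.ofReal r ^ k) := by
        refine ENNReal.tsum_le_tsum fun k => ?_
        simp_rw [← mul_assoc, ENNReal.tsum_mul_right, ← enorm_eq_nnnorm, ← enorm_mul]
        gcongr
        exact enorm_tsum_le_tsum_enorm
    _ = ∑' p : ℕ × ℕ, (‖b p.1‖₊ : ℝ≥0∞) * (‖P p.1 p.2‖₊ * ENNReal.ofReal r ^ p.2) := by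
        rw [ENNReal.tsum_comm, ENNReal.tsum_prod']
    _ ≤ majorant b r := tsum_prod_le_majorant hP

theorem HasPowerSeriesOnBall.comp_of_majorant_le {g φ : ℂ → ℂ} {δ ρ : ℝ}
    (hb : HasPowerSeriesOnBall b g ρ) (hP : ∀ n, HasPowerSeriesOnBall (P n) (fun z => φ z ^ n) δ)
    (hmaj : ∀ s, 0 ≤ s → s < δ → ∀ n, majorant (P n) s ≤ ENNReal.ofReal s ^ n) (hδ : δ ≤ ρ)
    (hφ : MapsTo φ (ball 0 δ) (ball 0 ρ)) :
    HasPowerSeriesOnBall (fun k => ∑' n, b n * P n k) (fun z => g (φ z)) δ := by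
  intro z hz
  have hz' : ‖z‖ < δ := mem_ball_zero_iff.mp hz
  have hsum : Summable fun p : ℕ × ℕ => b p.1 * (P p.1 p.2 * z ^ p.2) := by
    refine Summable.of_nnnorm (ENNReal.tsum_coe_ne_top_iff_summable.mp (ne_of_lt ?_))
    refine lt_of_le_of_lt ?_ (hb.majorant_lt_top (norm_nonneg z) (hz'.trans_le hδ))
    refine le_of_eq_of_le (tsum_congr fun p => ?_)
      (tsum_prod_le_majorant (hmaj _ (norm_nonneg z) hz'))
    simp [nnnorm_mul, ofReal_norm, enorm_eq_nnnorm]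
  refine (hb _ (hφ hz)).tsum_fiberwise_swap hsum (fun n => (hP n z hz).mul_left (b n))
    |>.congr_fun fun k => ?_
  rw [← tsum_mul_right]
  exact tsum_congr fun n => mul_assoc _ _ _

end Subordination

theorem bohr_subordination (f g φ : ℂ → ℂ) (a b : ℕ → ℂ)
    (hφ : DifferentiableOn ℂ φ (ball 0 1))
    (hφmap : ∀ z ∈ ball (0:ℂ) 1, φ z ∈ ball (0:ℂ) 1)
    (hφ0 : φ 0 = 0)
    (hsub : ∀ z ∈ ball (0:ℂ) 1, f z = g (φ z))
    (ha : ∀ z ∈ ball (0:ℂ) 1, HasSum (fun n => a n * z ^ n) (f z))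
    (hb : ∀ z ∈ ball (0:ℂ) 1, HasSum (fun n => b n * z ^ n) (g z)) :
    ∀ r : ℝ, 0 ≤ r → r ≤ 1/3 → majorant a r ≤ majorant b r := by
  intro r hr0 hr
  obtain ⟨c, hc⟩ := exists_hasPowerSeriesOnBall hφ
  set P : ℕ → ℕ → ℂ := fun n k => coeff k (mk c ^ n)
  have hP : ∀ s, 0 ≤ s → s ≤ 1 / 3 → ∀ n, majorant (P n) s ≤ ENNReal.ofReal s ^ n :=
    fun s hs0 hs n => (majorant_coeff_pow_le _ n s).trans <| pow_le_pow_left' (by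
      simpa only [coeff_mk] using hc.majorant_le_ofReal_of_map_zero
        (fun z hz => ball_subset_closedBall (hφmap z hz)) hφ0 hs0 hs) n
  have hcomp : HasPowerSeriesOnBall (fun k => ∑' n, b n * P n k) (fun z => g (φ z)) (1 / 3) :=
    HasPowerSeriesOnBall.comp_of_majorant_le hb (fun n => (hc.pow n).mono (by norm_num))
      (fun s hs0 hs => hP s hs0 hs.le) (by norm_num)
      fun z hz => hφmap z (ball_subset_ball (by norm_num) hz)
  have ha' : HasPowerSeriesOnBall a (fun z => g (φ z)) 1 := fun z hz => by
    simpa only [hsub z hz] using ha z hz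
  rw [ha'.eq_of_hasPowerSeriesOnBall hcomp one_pos (by norm_num)]
  exact majorant_tsum_mul_le (hP r hr0 hr)
end

section
/- Let f : 𝔻 → ℂ be analytic with |f(z)| ≤ 1 on 𝔻 and f(z) = Σ a_n z^n. Then for each n ≥ 1, |a_n| ≤ 1 - |a_0|². -/
open Metric

/-!
Averaging `f` over the rotations `z ↦ ζʲ z` by the `n`-th roots of unity leaves exactly the terms
`a (k * n) * z ^ (k * n)`, so `F (z ^ n) = ∑ a (k * n) (z ^ n) ^ k` defines a function bounded by
`1` whose first two coefficients are `a 0` and `a n`; this reduces the claim to `n = 1`. There,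
composing with the disc automorphism `w ↦ (w - a₀) / (1 - a̅₀ w)` gives a self-map of the disc
vanishing at `0` with derivative `a₁ / (1 - |a₀|²)`, which the Schwarz lemma bounds by `1`.
When `|a₀| = 1` this automorphism does not exist, so one applies the argument to `t f` and lets
`t → 1`.
-/

open Finset Filter Set Topology ComplexConjugate NNReal

section RootsOfUnityFilter

variable {K : Type*} [Field K] {ζ : K} {n : ℕ}

theorem IsPrimitiveRoot.sum_pow_pow_eq_ite (hζ : IsPrimitiveRoot ζ n) (m : ℕ) :
    ∑ j ∈ range n, (ζ ^ m) ^ j = if n ∣ m then (n : K) else 0 := by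
  split_ifs with hdvd
  · simp [(hζ.pow_eq_one_iff_dvd m).2 hdvd]
  · have hne : ζ ^ m ≠ 1 := mt (hζ.pow_eq_one_iff_dvd m).1 hdvd
    rw [geom_sum_eq hne, ← pow_mul, mul_comm, pow_mul, hζ.pow_eq_one, one_pow, sub_self,
      zero_div]

variable [TopologicalSpace K] [IsTopologicalRing K] [CharZero K]

theorem IsPrimitiveRoot.hasSum_coeff_mul_of_hasSum_rotate (hζ : IsPrimitiveRoot ζ n)
    (hn : n ≠ 0) {a : ℕ → K} {z : K} {s : ℕ → K}
    (hs : ∀ j ∈ range n, HasSum (fun m => a m * (ζ ^ j * z) ^ m) (s j)) :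
    HasSum (fun k => a (k * n) * (z ^ n) ^ k) ((n : K)⁻¹ * ∑ j ∈ range n, s j) := by
  have hsum : HasSum (fun m => (if n ∣ m then (n : K) else 0) * (a m * z ^ m))
      (∑ j ∈ range n, s j) := by
    convert hasSum_sum hs using 2 with m
    simp_rw [← hζ.sum_pow_pow_eq_ite, sum_mul, mul_pow, ← pow_mul, mul_comm m]
    exact sum_congr rfl fun j _ => by ring
  have hsupp : ∀ m ∉ Set.range (· * n), (if n ∣ m then (n : K) else 0) * (a m * z ^ m) = 0 := by
    intro m hm
    rw [if_neg fun ⟨k, hk⟩ => hm ⟨k, by rw [hk, mul_comm]⟩, zero_mul]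
  have hsub := ((mul_left_injective₀ hn).hasSum_iff hsupp).2 hsum
  refine (hsub.mul_left (n : K)⁻¹).congr_fun fun k => ?_
  simp [← pow_mul, mul_comm n k, hn]

end RootsOfUnityFilter

namespace Complex

theorem norm_sub_le_norm_one_sub_conj_mul {c w : ℂ} (hc : ‖c‖ ≤ 1) (hw : ‖w‖ ≤ 1) :
    ‖w - c‖ ≤ ‖1 - conj c * w‖ := by
  have hnormSq_sub :
      normSq (1 - conj c * w) - normSq (w - c) = (1 - normSq c) * (1 - normSq w) := by
    simp only [normSq_apply, sub_re, sub_im, mul_re, mul_im, one_re, one_im, conj_re, conj_im]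
    ring
  rw [← sq_le_sq₀ (norm_nonneg _) (norm_nonneg _), Complex.sq_norm, Complex.sq_norm]
  rw [← sq_le_one_iff₀ (norm_nonneg _), Complex.sq_norm] at hc hw
  nlinarith

theorem hasDerivAt_mobius {c : ℂ} (hc : ‖c‖ < 1) :
    HasDerivAt (fun w => (w - c) / (1 - conj c * w)) ((1 - ‖c‖ ^ 2 : ℝ) : ℂ)⁻¹ c := by
  have hden : (1 : ℂ) - conj c * c = ((1 - ‖c‖ ^ 2 : ℝ) : ℂ) := by
    rw [mul_comm, mul_conj, normSq_eq_norm_sq]; push_cast; ring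
  have hne : ((1 - ‖c‖ ^ 2 : ℝ) : ℂ) ≠ 0 := ofReal_ne_zero.2 (by nlinarith [norm_nonneg c])
  refine (((hasDerivAt_id' c).sub_const c).div
    (((hasDerivAt_id' c).const_mul (conj c)).const_sub 1) (by rwa [hden])).congr_deriv ?_
  rw [sub_self, zero_mul, sub_zero, one_mul, hden]
  generalize ((1 - ‖c‖ ^ 2 : ℝ) : ℂ) = r at hne ⊢
  field_simp

theorem norm_deriv_le_one_sub_sq_of_norm_lt_one {G : ℂ → ℂ}
    (hd : DifferentiableOn ℂ G (ball 0 1)) (hG : MapsTo G (ball 0 1) (closedBall 0 1))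
    (h0 : ‖G 0‖ < 1) : ‖deriv G 0‖ ≤ 1 - ‖G 0‖ ^ 2 := by
  set c := G 0
  have hpos : 0 < 1 - ‖c‖ ^ 2 := by nlinarith [norm_nonneg c]
  have hGz : ∀ z ∈ ball (0 : ℂ) 1, ‖G z‖ ≤ 1 := fun z hz => mem_closedBall_zero_iff.1 (hG hz)
  have hden : ∀ z ∈ ball (0 : ℂ) 1, 1 - conj c * G z ≠ 0 := by
    intro z hz h
    have : ‖conj c * G z‖ < 1 := by
      rw [norm_mul, RCLike.norm_conj]
      exact mul_lt_one_of_nonneg_of_lt_one_left (norm_nonneg _) h0 (hGz z hz)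
    rw [← sub_eq_zero.1 h, norm_one] at this
    exact lt_irrefl _ this
  set H := fun z => (G z - c) / (1 - conj c * G z)
  have hHd : DifferentiableOn ℂ H (ball 0 1) :=
    (hd.sub_const c).div ((differentiableOn_const 1).sub (hd.const_mul _)) hden
  have hH : MapsTo H (ball 0 1) (closedBall (H 0) 1) := by
    intro z hz
    simp only [H, c, sub_self, zero_div, mem_closedBall_zero_iff, norm_div]
    exact div_le_one_of_le₀ (norm_sub_le_norm_one_sub_conj_mul h0.le (hGz z hz)) (norm_nonneg _)
  have hderiv : deriv H 0 = ((1 - ‖c‖ ^ 2 : ℝ) : ℂ)⁻¹ * deriv G 0 :=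
    ((hasDerivAt_mobius h0).comp 0
      (hd.differentiableAt (isOpen_ball.mem_nhds (mem_ball_self one_pos))).hasDerivAt).deriv
  have hschwarz := norm_deriv_le_one_of_mapsTo_ball hHd hH one_pos
  rwa [hderiv, norm_mul, norm_inv, norm_real, Real.norm_of_nonneg hpos.le, inv_mul_le_iff₀ hpos,
    mul_one] at hschwarz

theorem norm_deriv_le_one_sub_sq {G : ℂ → ℂ}
    (hd : DifferentiableOn ℂ G (ball 0 1)) (hG : MapsTo G (ball 0 1) (closedBall 0 1)) :
    ‖deriv G 0‖ ≤ 1 - ‖G 0‖ ^ 2 := by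
  have hG0 : ‖G 0‖ ≤ 1 := mem_closedBall_zero_iff.1 (hG (mem_ball_self one_pos))
  have hdiff : DifferentiableAt ℂ G 0 :=
    hd.differentiableAt (isOpen_ball.mem_nhds (mem_ball_self one_pos))
  have hscaled : ∀ t ∈ Ioo (0 : ℝ) 1, t * ‖deriv G 0‖ ≤ 1 - t ^ 2 * ‖G 0‖ ^ 2 := by
    rintro t ⟨ht0, ht1⟩
    have hmaps : MapsTo (fun z => (t : ℂ) * G z) (ball 0 1) (closedBall 0 1) := by
      intro z hz
      rw [mem_closedBall_zero_iff, norm_mul, norm_real, Real.norm_of_nonneg ht0.le]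
      exact mul_le_one₀ ht1.le (norm_nonneg _) (mem_closedBall_zero_iff.1 (hG hz))
    have hlt : ‖(t : ℂ) * G 0‖ < 1 := by
      rw [norm_mul, norm_real, Real.norm_of_nonneg ht0.le]
      exact mul_lt_one_of_nonneg_of_lt_one_left ht0.le ht1 hG0
    have h := norm_deriv_le_one_sub_sq_of_norm_lt_one (hd.const_mul _) hmaps hlt
    rwa [deriv_const_mul _ hdiff, norm_mul, norm_mul, norm_real, Real.norm_of_nonneg ht0.le,
      mul_pow] at h
  have hlim : ∀ g : ℝ → ℝ, Continuous g → Tendsto g (𝓝[<] 1) (𝓝 (g 1)) := fun g hg =>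
    tendsto_nhdsWithin_of_tendsto_nhds (hg.tendsto 1)
  simpa using le_of_tendsto_of_tendsto (hlim (fun t => t * ‖deriv G 0‖) (by fun_prop))
    (hlim (fun t => 1 - t ^ 2 * ‖G 0‖ ^ 2) (by fun_prop))
    (eventually_of_mem (Ioo_mem_nhdsLT zero_lt_one) hscaled)

end Complex

theorem hasFPowerSeriesOnBall_ofScalars_of_hasSum {f : ℂ → ℂ} {a : ℕ → ℂ} {r : ℝ≥0}
    (hr : 0 < r)
    (ha : ∀ z ∈ ball (0 : ℂ) r, HasSum (fun n => a n * z ^ n) (f z)) :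
    HasFPowerSeriesOnBall f (FormalMultilinearSeries.ofScalars ℂ a) 0 r := by
  refine ⟨ENNReal.le_of_forall_nnreal_lt fun ρ hρ => ?_, ?_, fun {y} hy => ?_⟩
  · refine FormalMultilinearSeries.le_radius_of_summable_norm _ ?_
    have hmem : (ρ : ℂ) ∈ ball (0 : ℂ) r := by simpa using hρ
    simpa [FormalMultilinearSeries.ofScalars_norm] using
      summable_norm_iff.2 (ha _ hmem).summable
  · exact_mod_cast hr
  · rw [Metric.eball_coe] at hy
    simpa [FormalMultilinearSeries.ofScalars_apply_eq, mul_comm] using ha y hy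

theorem norm_coeff_one_le_one_sub_sq {f : ℂ → ℂ} {a : ℕ → ℂ}
    (ha : ∀ z ∈ ball (0 : ℂ) 1, HasSum (fun n => a n * z ^ n) (f z))
    (hbd : ∀ z ∈ ball (0 : ℂ) 1, ‖f z‖ ≤ 1) :
    ‖a 1‖ ≤ 1 - ‖a 0‖ ^ 2 := by
  have hf := hasFPowerSeriesOnBall_ofScalars_of_hasSum one_pos (by simpa using ha)
  have hd : DifferentiableOn ℂ f (ball 0 1) := by
    simpa [← ENNReal.coe_one, Metric.eball_coe] using hf.differentiableOn
  have h0 : f 0 = a 0 := by simpa using (hf.coeff_zero ![]).symm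
  have h1 : deriv f 0 = a 1 := by
    rw [hf.hasFPowerSeriesAt.deriv]
    exact FormalMultilinearSeries.coeff_ofScalars
  rw [← h0, ← h1]
  exact Complex.norm_deriv_le_one_sub_sq hd fun z hz => mem_closedBall_zero_iff.2 (hbd z hz)

theorem exists_hasSum_coeff_mul_of_norm_le {f : ℂ → ℂ} {a : ℕ → ℂ} {M : ℝ}
    (ha : ∀ z ∈ ball (0 : ℂ) 1, HasSum (fun n => a n * z ^ n) (f z))
    (hbd : ∀ z ∈ ball (0 : ℂ) 1, ‖f z‖ ≤ M) {n : ℕ} (hn : n ≠ 0) :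
    ∃ F : ℂ → ℂ, ∀ w ∈ ball (0 : ℂ) 1,
      HasSum (fun k => a (k * n) * w ^ k) (F w) ∧ ‖F w‖ ≤ M := by
  set ζ := Complex.exp (2 * Real.pi * Complex.I / n)
  have hζ : IsPrimitiveRoot ζ n := Complex.isPrimitiveRoot_exp n hn
  have hrot : ∀ j z, z ∈ ball (0 : ℂ) 1 → ζ ^ j * z ∈ ball (0 : ℂ) 1 := by
    intro j z hz
    rwa [mem_ball_zero_iff, norm_mul, norm_pow, hζ.norm'_eq_one hn, one_pow, one_mul,
      ← mem_ball_zero_iff]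
  refine ⟨fun w => (n : ℂ)⁻¹ * ∑ j ∈ range n, f (ζ ^ j * w ^ (n⁻¹ : ℂ)), fun w hw => ?_⟩
  set z := w ^ (n⁻¹ : ℂ)
  have hzw : z ^ n = w := Complex.cpow_nat_inv_pow w hn
  have hz : z ∈ ball (0 : ℂ) 1 := by
    rw [mem_ball_zero_iff] at hw ⊢
    rwa [← pow_lt_one_iff_of_nonneg (norm_nonneg z) hn, ← norm_pow, hzw]
  constructor
  · simpa [hzw] using hζ.hasSum_coeff_mul_of_hasSum_rotate hn fun j _ => ha _ (hrot j z hz)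
  · calc ‖(n : ℂ)⁻¹ * ∑ j ∈ range n, f (ζ ^ j * z)‖
        ≤ (n : ℝ)⁻¹ * ∑ j ∈ range n, ‖f (ζ ^ j * z)‖ := by
          rw [norm_mul, norm_inv, Complex.norm_natCast]
          gcongr
          exact norm_sum_le _ _
      _ ≤ (n : ℝ)⁻¹ * ∑ j ∈ range n, M := by
          gcongr with j
          exact hbd _ (hrot j z hz)
      _ = M := by
          rw [sum_const, card_range, nsmul_eq_mul, inv_mul_cancel_left₀ (by exact_mod_cast hn)]

theorem schur_wiener_coeff (f : ℂ → ℂ) (a : ℕ → ℂ)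
    (ha : ∀ z ∈ ball (0:ℂ) 1, HasSum (fun n => a n * z ^ n) (f z))
    (hbd : ∀ z ∈ ball (0:ℂ) 1, ‖f z‖ ≤ 1) :
    ∀ n, 1 ≤ n → ‖a n‖ ≤ 1 - ‖a 0‖ ^ 2 := by
  intro n hn
  obtain ⟨F, hF⟩ := exists_hasSum_coeff_mul_of_norm_le ha hbd (Nat.one_le_iff_ne_zero.1 hn)
  simpa using norm_coeff_one_le_one_sub_sq (fun w hw => (hF w hw).1) (fun w hw => (hF w hw).2)
end

section
/- Let f : 𝔻 → ℂ be analytic with |f(z)| ≤ 1 on 𝔻 and f(z) = Σ a_n z^n. Then Σ_{n=0}^∞ |a_n| r^n ≤ 1 for all 0 ≤ r ≤ 1/3. -/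
/-!
Wiener's inequality `‖a n‖ ≤ 1 - ‖a 0‖ ^ 2` for `n ≠ 0` gives, with `x = ‖a 0‖` and `r ≤ 1/3`,
`∑ ‖a n‖ rⁿ ≤ x + (1 - x²) r / (1 - r) ≤ x + (1 - x²) / 2 ≤ 1`.
For `n = 1`, Wiener's inequality is the Schwarz–Pick lemma at the origin: the Schwarz lemma applied
to `f` followed by the Blaschke factor sending `f 0` to `0`. For general `n`, the average of `f`
over the rotations `z ↦ ζᵏ z` by the `n`-th roots of unity is a function of `w = zⁿ`, still bounded
by `1`, with coefficients `a (n * m)`; the case `n = 1` applied to it bounds `a n`.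
-/

open Metric

open Set Complex ComplexConjugate

noncomputable def blaschkeFactor (c w : ℂ) : ℂ := (w - c) / (1 - conj c * w)

theorem one_sub_conj_mul_ne_zero_s7 {c w : ℂ} (hc : ‖c‖ < 1) (hw : ‖w‖ ≤ 1) :
    1 - conj c * w ≠ 0 := by
  intro h
  have hlt : ‖conj c * w‖ < 1 := by
    rw [norm_mul, RCLike.norm_conj]
    nlinarith [norm_nonneg c, norm_nonneg w]
  rw [← sub_eq_zero.mp h, norm_one] at hlt
  exact hlt.false

theorem norm_one_sub_conj_mul_sq_sub_norm_sub_sq (c w : ℂ) :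
    ‖1 - conj c * w‖ ^ 2 - ‖w - c‖ ^ 2 = (1 - ‖c‖ ^ 2) * (1 - ‖w‖ ^ 2) := by
  simp only [← normSq_eq_norm_sq, normSq_apply, sub_re, sub_im, mul_re, mul_im, one_re, one_im,
    conj_re, conj_im]
  ring

theorem norm_blaschkeFactor_lt_one {c w : ℂ} (hc : ‖c‖ < 1) (hw : ‖w‖ < 1) :
    ‖blaschkeFactor c w‖ < 1 := by
  have hden := one_sub_conj_mul_ne_zero_s7 hc hw.le
  rw [blaschkeFactor, norm_div, div_lt_one (norm_pos_iff.mpr hden)]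
  refine lt_of_pow_lt_pow_left₀ 2 (norm_nonneg _) (sub_pos.mp ?_)
  rw [norm_one_sub_conj_mul_sq_sub_norm_sub_sq]
  exact mul_pos (by nlinarith [norm_nonneg c]) (by nlinarith [norm_nonneg w])

theorem differentiableOn_blaschkeFactor {c : ℂ} (hc : ‖c‖ < 1) :
    DifferentiableOn ℂ (blaschkeFactor c) (ball 0 1) :=
  (differentiableOn_id.sub_const c).div
    ((differentiableOn_const 1).sub (differentiableOn_id.const_mul _))
    fun _ hw => one_sub_conj_mul_ne_zero_s7 hc (mem_ball_zero_iff.mp hw).le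

theorem hasDerivAt_blaschkeFactor_self {c : ℂ} (hc : ‖c‖ < 1) :
    HasDerivAt (blaschkeFactor c) ((1 - ‖c‖ ^ 2)⁻¹ : ℝ) c := by
  have hden := one_sub_conj_mul_ne_zero_s7 hc hc.le
  refine (((hasDerivAt_id' c).sub_const c).div
    (((hasDerivAt_id' c).const_mul (conj c)).const_sub 1) hden).congr_deriv ?_
  rw [conj_mul'] at hden ⊢
  push_cast
  field_simp
  ring

theorem norm_deriv_le_one_sub_norm_sq_of_mapsTo_ball {g : ℂ → ℂ} {z₀ : ℂ}
    (hd : DifferentiableOn ℂ g (ball z₀ 1)) (hg : MapsTo g (ball z₀ 1) (ball 0 1)) :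
    ‖deriv g z₀‖ ≤ 1 - ‖g z₀‖ ^ 2 := by
  set c := g z₀
  have hc : ‖c‖ < 1 := mem_ball_zero_iff.mp (hg (mem_ball_self one_pos))
  have hpos : 0 < 1 - ‖c‖ ^ 2 := by nlinarith [norm_nonneg c]
  have hcomp : HasDerivAt (blaschkeFactor c ∘ g) (((1 - ‖c‖ ^ 2)⁻¹ : ℝ) * deriv g z₀) z₀ :=
    (hasDerivAt_blaschkeFactor_self hc).comp z₀
      (hd.differentiableAt (isOpen_ball.mem_nhds (mem_ball_self one_pos))).hasDerivAt
  have hschwarz : ‖deriv (blaschkeFactor c ∘ g) z₀‖ ≤ 1 := by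
    refine norm_deriv_le_one_of_mapsTo_ball ((differentiableOn_blaschkeFactor hc).comp hd hg)
      (fun z hz => ?_) one_pos
    simpa [blaschkeFactor, c] using
      (norm_blaschkeFactor_lt_one hc (mem_ball_zero_iff.mp (hg hz))).le
  rwa [hcomp.deriv, norm_mul, norm_real, Real.norm_of_nonneg (inv_nonneg.mpr hpos.le),
    inv_mul_le_iff₀ hpos, mul_one] at hschwarz

theorem norm_deriv_le_one_sub_norm_sq_of_mapsTo_closedBall {g : ℂ → ℂ} {z₀ : ℂ}
    (hd : DifferentiableOn ℂ g (ball z₀ 1)) (hg : MapsTo g (ball z₀ 1) (closedBall 0 1)) :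
    ‖deriv g z₀‖ ≤ 1 - ‖g z₀‖ ^ 2 := by
  by_cases hmax : ∃ z ∈ ball z₀ 1, ‖g z‖ = 1
  · obtain ⟨z, hz, hgz⟩ := hmax
    have hconst : EqOn g (Function.const ℂ (g z)) (ball z₀ 1) :=
      eqOn_of_isPreconnected_of_isMaxOn_norm (convex_ball _ _).isPreconnected isOpen_ball hd hz
        fun w hw => by simpa [hgz] using hg hw
    have hderiv : deriv g z₀ = 0 := by
      rw [(hconst.eventuallyEq_of_mem (isOpen_ball.mem_nhds (mem_ball_self one_pos))).deriv_eq]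
      exact deriv_const _ _
    rw [hderiv, hconst (mem_ball_self one_pos), Function.const_apply, hgz]
    norm_num
  · push Not at hmax
    exact norm_deriv_le_one_sub_norm_sq_of_mapsTo_ball hd fun z hz => mem_ball_zero_iff.mpr
      (lt_of_le_of_ne (mem_closedBall_zero_iff.mp (hg hz)) (hmax z hz))

theorem IsPrimitiveRoot.geom_sum_pow {K : Type*} [Field K] {ζ : K} {n : ℕ}
    (hζ : IsPrimitiveRoot ζ n) (m : ℕ) :
    ∑ k ∈ Finset.range n, (ζ ^ m) ^ k = if n ∣ m then (n : K) else 0 := by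
  split_ifs with hdvd
  · simp [(hζ.pow_eq_one_iff_dvd m).mpr hdvd]
  · have hne : ζ ^ m ≠ 1 := mt (hζ.pow_eq_one_iff_dvd m).mp hdvd
    rw [geom_sum_eq hne, ← pow_mul, mul_comm, pow_mul, hζ.pow_eq_one, one_pow, sub_self, zero_div]

section PowerSeries

variable {b : ℕ → ℂ} {g : ℂ → ℂ}

theorem hasFPowerSeriesOnBall_ofScalars_of_hasSum_s7 {R : NNReal} (hR : 0 < R)
    (hb : ∀ z ∈ ball (0 : ℂ) R, HasSum (fun n => b n * z ^ n) (g z)) :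
    HasFPowerSeriesOnBall g (FormalMultilinearSeries.ofScalars ℂ b) 0 R := by
  refine ⟨ENNReal.le_of_forall_nnreal_lt fun r hr => ?_, ENNReal.coe_pos.mpr hR, fun {y} hy => ?_⟩
  · have hr : (r : ℂ) ∈ ball (0 : ℂ) R := by simpa using hr
    refine FormalMultilinearSeries.le_radius_of_tendsto _ (l := 0) ?_
    simpa [FormalMultilinearSeries.ofScalars_norm] using (hb _ hr).summable.tendsto_atTop_zero.norm
  · have hy : y ∈ ball (0 : ℂ) R := by simpa [← edist_zero_right, edist_lt_coe, nndist] using hy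
    simpa [FormalMultilinearSeries.ofScalars_apply_eq, mul_comm] using hb y hy

theorem norm_coeff_one_le_one_sub_norm_coeff_zero_sq
    (hb : ∀ z ∈ ball (0 : ℂ) 1, HasSum (fun n => b n * z ^ n) (g z))
    (hbd : ∀ z ∈ ball (0 : ℂ) 1, ‖g z‖ ≤ 1) :
    ‖b 1‖ ≤ 1 - ‖b 0‖ ^ 2 := by
  have hp := hasFPowerSeriesOnBall_ofScalars_of_hasSum_s7 (R := 1) one_pos (by simpa using hb)
  have hd : DifferentiableOn ℂ g (ball 0 1) := by
    simpa [← Metric.eball_ofReal] using hp.differentiableOn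
  have h0 : g 0 = b 0 := by
    simpa [FormalMultilinearSeries.ofScalars_apply_eq] using (hp.coeff_zero fun _ => 1).symm
  have h1 : deriv g 0 = b 1 := by
    simpa [FormalMultilinearSeries.ofScalars_apply_eq] using hp.hasFPowerSeriesAt.deriv
  rw [← h0, ← h1]
  exact norm_deriv_le_one_sub_norm_sq_of_mapsTo_closedBall hd
    fun z hz => mem_closedBall_zero_iff.mpr (hbd z hz)

theorem hasSum_coeff_mul_pow_eq_average_rotations
    (hb : ∀ z ∈ ball (0 : ℂ) 1, HasSum (fun n => b n * z ^ n) (g z))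
    {n : ℕ} (hn : n ≠ 0) {ζ : ℂ} (hζ : IsPrimitiveRoot ζ n) {z : ℂ} (hz : z ∈ ball (0 : ℂ) 1) :
    HasSum (fun m => b (n * m) * (z ^ n) ^ m)
      ((n : ℂ)⁻¹ * ∑ k ∈ Finset.range n, g (ζ ^ k * z)) := by
  have hrot : ∀ k ∈ Finset.range n,
      HasSum (fun m => b m * (ζ ^ k * z) ^ m) (g (ζ ^ k * z)) := fun k _ =>
    hb _ (by simpa [hζ.norm'_eq_one hn] using hz)
  have hfilter : HasSum (fun m => if n ∣ m then b m * z ^ m else 0)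
      ((n : ℂ)⁻¹ * ∑ k ∈ Finset.range n, g (ζ ^ k * z)) := by
    refine ((hasSum_sum hrot).mul_left _).congr_fun fun m => ?_
    have hterm : ∀ k, b m * (ζ ^ k * z) ^ m = b m * z ^ m * (ζ ^ m) ^ k := fun k => by ring
    simp_rw [hterm, ← Finset.mul_sum, hζ.geom_sum_pow]
    split_ifs
    · field_simp
    · simp
  have hinj : Function.Injective (n * ·) := mul_right_injective₀ hn
  refine ((hinj.hasSum_iff fun m hm => if_neg ?_).mpr hfilter).congr_fun fun m => ?_
  · rintro ⟨k, rfl⟩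
    exact hm ⟨k, rfl⟩
  · simp [pow_mul]

theorem norm_coeff_le_one_sub_norm_coeff_zero_sq
    (hb : ∀ z ∈ ball (0 : ℂ) 1, HasSum (fun n => b n * z ^ n) (g z))
    (hbd : ∀ z ∈ ball (0 : ℂ) 1, ‖g z‖ ≤ 1) {n : ℕ} (hn : n ≠ 0) :
    ‖b n‖ ≤ 1 - ‖b 0‖ ^ 2 := by
  obtain ⟨ζ, hζ⟩ : ∃ ζ : ℂ, IsPrimitiveRoot ζ n := ⟨_, isPrimitiveRoot_exp n hn⟩
  have hsection : ∀ w ∈ ball (0 : ℂ) 1, ∃ s, HasSum (fun m => b (n * m) * w ^ m) s ∧ ‖s‖ ≤ 1 := by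
    intro w hw
    obtain ⟨z, rfl⟩ := IsAlgClosed.exists_pow_nat_eq w (Nat.pos_of_ne_zero hn)
    have hz : z ∈ ball (0 : ℂ) 1 := by
      simpa [norm_pow, pow_lt_one_iff_of_nonneg (norm_nonneg z) hn] using hw
    refine ⟨_, hasSum_coeff_mul_pow_eq_average_rotations hb hn hζ hz, ?_⟩
    have hsum : ‖∑ k ∈ Finset.range n, g (ζ ^ k * z)‖ ≤ n := by
      refine (norm_sum_le _ _).trans ?_
      simpa using Finset.sum_le_sum fun k (_ : k ∈ Finset.range n) =>
        hbd _ (by simpa [hζ.norm'_eq_one hn] using hz)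
    rw [norm_mul, norm_inv, norm_natCast]
    exact inv_mul_le_one_of_le₀ hsum (Nat.cast_nonneg n)
  simpa using norm_coeff_one_le_one_sub_norm_coeff_zero_sq (b := fun m => b (n * m))
    (fun w hw => (hsection w hw).choose_spec.1.summable.hasSum)
    (fun w hw => (hsection w hw).choose_spec.1.tsum_eq ▸ (hsection w hw).choose_spec.2)

end PowerSeries

theorem tsum_ofReal_third_pow_succ :
    ∑' m : ℕ, ENNReal.ofReal (1 / 3) ^ (m + 1) = ENNReal.ofReal (1 / 2) := by
  rw [ENNReal.tsum_geometric_add_one, ← ENNReal.ofReal_one, ← ENNReal.ofReal_sub _ (by norm_num),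
    ← ENNReal.ofReal_inv_of_pos (by norm_num), ← ENNReal.ofReal_mul (by norm_num)]
  norm_num

theorem majorant_le_one_of_norm_coeff_le {a : ℕ → ℂ} {r : ℝ}
    (ha : ∀ n, n ≠ 0 → ‖a n‖ ≤ 1 - ‖a 0‖ ^ 2) (hr : r ≤ 1 / 3) :
    majorant a r ≤ 1 := by
  set x := ‖a 0‖
  have hx : x ^ 2 ≤ 1 := sub_nonneg.mp ((norm_nonneg _).trans (ha 1 one_ne_zero))
  have htail : ∀ m : ℕ, (‖a (m + 1)‖₊ : ENNReal) * ENNReal.ofReal r ^ (m + 1)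
      ≤ ENNReal.ofReal (1 - x ^ 2) * ENNReal.ofReal (1 / 3) ^ (m + 1) := fun m => by
    rw [← enorm_eq_nnnorm, ← ofReal_norm]
    gcongr
    exact ha _ m.succ_ne_zero
  calc majorant a r
      = ENNReal.ofReal x + ∑' m : ℕ, (‖a (m + 1)‖₊ : ENNReal) * ENNReal.ofReal r ^ (m + 1) := by
        rw [majorant, tsum_eq_zero_add' ENNReal.summable, pow_zero, mul_one, ← enorm_eq_nnnorm,
          ← ofReal_norm]
    _ ≤ ENNReal.ofReal x + ENNReal.ofReal (1 - x ^ 2) * ENNReal.ofReal (1 / 2) := by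
        rw [← tsum_ofReal_third_pow_succ, ← ENNReal.tsum_mul_left]
        gcongr ENNReal.ofReal x + ?_
        exact ENNReal.tsum_le_tsum htail
    _ = ENNReal.ofReal (x + (1 - x ^ 2) / 2) := by
        rw [← ENNReal.ofReal_mul (by linarith),
          ← ENNReal.ofReal_add (norm_nonneg _) (by positivity)]
        congr 1
        ring
    _ ≤ 1 := ENNReal.ofReal_le_one.mpr (by nlinarith [sq_nonneg (1 - x)])

theorem bohr_theorem (f : ℂ → ℂ) (a : ℕ → ℂ)
    (ha : ∀ z ∈ ball (0:ℂ) 1, HasSum (fun n => a n * z ^ n) (f z))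
    (hbd : ∀ z ∈ ball (0:ℂ) 1, ‖f z‖ ≤ 1) :
    ∀ r : ℝ, 0 ≤ r → r ≤ 1/3 → majorant a r ≤ 1 := by
  intro r _ hr
  exact majorant_le_one_of_norm_coeff_le
    (fun n hn => norm_coeff_le_one_sub_norm_coeff_zero_sq ha hbd hn) hr
end

section
/- Let g : 𝔻 → ℂ be a starlike univalent function normalized by g(0) = 0, g'(0) = 1, with g(z) = z + Σ_{n≥2} g_n z^n. Then |g_n| ≤ n for all n ≥ 2. -/
open Metric

/-!
Comparing Taylor coefficients in `z g' = q g` gives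
`(n - 1) g_n = ∑_{k=1}^{n-1} q_k g_{n-k}`. Carathéodory's lemma `|q_k| ≤ 2 Re q(0) = 2` comes
from averaging `z⁻ᵏ · 2 Re q` over the circle `|z| = r`: there `conj z = r² / z`, so
`z⁻ᵏ · 2 Re q = z⁻ᵏ q + r⁻²ᵏ conj (zᵏ q)`, whose averages are `q_k` and `0`. Strong induction
then gives `|g_n| ≤ (2 / (n - 1)) ∑_{k=1}^{n-1} (n - k) = n`.
-/

open Complex ComplexConjugate Real Filter Topology Nat Finset
open FormalMultilinearSeries (ofScalars ofScalars_norm ofScalars_apply_eq)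

noncomputable def taylorCoeff (f : ℂ → ℂ) (n : ℕ) : ℂ := iteratedDeriv n f 0 / n !

theorem hasFPowerSeriesOnBall_ofScalars_of_hasSum_s10 {f : ℂ → ℂ} {a : ℕ → ℂ} {R : ℝ}
    (hR : 0 < R) (h : ∀ z ∈ ball (0 : ℂ) R, HasSum (fun n ↦ a n * z ^ n) (f z)) :
    HasFPowerSeriesOnBall f (ofScalars ℂ a) 0 (ENNReal.ofReal R) where
  r_le := by
    refine ENNReal.le_of_forall_nnreal_lt fun r hr ↦ ?_
    have hrR : (r : ℝ) < R := by simpa using (ENNReal.lt_ofReal_iff_toReal_lt (by simp)).1 hr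
    have hsum := h r (by simpa [abs_of_nonneg r.2] using hrR)
    refine (ofScalars ℂ a).le_radius_of_tendsto (l := 0) ?_
    simpa [ofScalars_norm] using hsum.summable.tendsto_atTop_zero.norm
  r_pos := ENNReal.ofReal_pos.2 hR
  hasSum hy := by
    rw [zero_add]
    simpa [ofScalars_apply_eq, mul_comm] using h _ (by simpa using hy)

theorem taylorCoeff_eq_of_hasSum {f : ℂ → ℂ} {a : ℕ → ℂ} {R : ℝ} (hR : 0 < R)
    (h : ∀ z ∈ ball (0 : ℂ) R, HasSum (fun n ↦ a n * z ^ n) (f z)) (n : ℕ) :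
    taylorCoeff f n = a n := by
  have := (hasFPowerSeriesOnBall_ofScalars_of_hasSum_s10 hR h).factorial_smul 1 n
  rw [iteratedFDeriv_apply_eq_iteratedDeriv_mul_prod] at this
  simp only [ofScalars_apply_eq, one_pow, smul_eq_mul, mul_one, nsmul_eq_mul,
    Finset.prod_const_one, one_mul] at this
  rw [taylorCoeff, ← this, mul_div_cancel_left₀ _ (by exact_mod_cast n.factorial_ne_zero)]

theorem norm_circleAverage_le {E : Type*} [NormedAddCommGroup E] [NormedSpace ℝ E]
    (f : ℂ → E) (c : ℂ) (R : ℝ) :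
    ‖circleAverage f c R‖ ≤ circleAverage (fun z ↦ ‖f z‖) c R := by
  rw [circleAverage_def, circleAverage_def, norm_smul, smul_eq_mul, norm_inv,
    Real.norm_of_nonneg two_pi_pos.le]
  gcongr
  exact intervalIntegral.norm_integral_le_integral_norm two_pi_pos.le

theorem circleAverage_inv_pow_mul_eq_taylorCoeff {f : ℂ → ℂ} {r : ℝ} (hr : 0 < r)
    (hf : DifferentiableOn ℂ f (closedBall 0 r)) (n : ℕ) :
    circleAverage (fun z ↦ (z ^ n)⁻¹ * f z) 0 r = taylorCoeff f n := by
  have hcauchy := hf.circleIntegral_one_div_sub_center_pow_smul hr n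
  have hintegrand :
      (fun z ↦ (z - 0)⁻¹ • ((z ^ n)⁻¹ * f z)) = fun z ↦ (1 / (z - 0) ^ (n + 1)) • f z := by
    funext z
    simp only [sub_zero, smul_eq_mul, one_div]
    ring
  rw [circleAverage_eq_circleIntegral hr.ne', hintegrand, hcauchy, smul_smul, taylorCoeff,
    smul_eq_mul]
  field_simp [two_pi_I_ne_zero]

theorem inv_pow_mul_two_re_eq {z : ℂ} {r : ℝ} (hz : ‖z‖ = r) (hr : r ≠ 0) (n : ℕ) (w : ℂ) :
    (z ^ n)⁻¹ * ((2 * w.re : ℝ) : ℂ) =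
      (z ^ n)⁻¹ * w + ((r ^ (2 * n))⁻¹ : ℝ) • conj (z ^ n * w) := by
  have hz₀ : z ≠ 0 := by
    rintro rfl
    exact hr (by simpa using hz.symm)
  have hconj : conj z = r ^ 2 / z := by
    rw [eq_div_iff hz₀, ← normSq_eq_conj_mul_self, normSq_eq_norm_sq, hz]
    push_cast
    ring
  have hr' : (r : ℂ) ≠ 0 := by exact_mod_cast hr
  simp only [map_mul, map_pow, hconj, Complex.real_smul]
  rw [← Complex.add_conj]
  push_cast
  rw [div_pow, ← pow_mul]
  field_simp

theorem circleAverage_inv_pow_mul_two_re {q : ℂ → ℂ} {r : ℝ} (hr : 0 < r)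
    (hq : DifferentiableOn ℂ q (closedBall 0 r)) {n : ℕ} (hn : n ≠ 0) :
    circleAverage (fun z ↦ (z ^ n)⁻¹ * ((2 * (q z).re : ℝ) : ℂ)) 0 r = taylorCoeff q n := by
  have hsphere : ∀ z ∈ sphere (0 : ℂ) |r|, ‖z‖ = r := by simp [abs_of_pos hr]
  have hcont : ContinuousOn q (sphere 0 |r|) := by
    rw [abs_of_pos hr]
    exact hq.continuousOn.mono sphere_subset_closedBall
  have hint₁ : CircleIntegrable (fun z ↦ (z ^ n)⁻¹ * q z) 0 r :=
    ContinuousOn.circleIntegrable' (((continuousOn_pow n).inv₀ fun z hz ↦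
      pow_ne_zero _ (norm_pos_iff.1 (hsphere z hz ▸ hr))).mul hcont)
  have hint₂ : CircleIntegrable (fun z ↦ z ^ n * q z) 0 r :=
    ContinuousOn.circleIntegrable' ((continuousOn_pow n).mul hcont)
  have hint₃ : CircleIntegrable (fun z ↦ ((r ^ (2 * n))⁻¹ : ℝ) • conj (z ^ n * q z)) 0 r :=
    ContinuousOn.circleIntegrable' (by fun_prop)
  have hvanish : circleAverage (fun z ↦ z ^ n * q z) 0 r = 0 := by
    have hdiff : DiffContOnCl ℂ (fun z ↦ z ^ n * q z) (ball 0 |r|) := by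
      rw [abs_of_pos hr]
      exact (((differentiableOn_pow n).mul hq).mono closure_ball_subset_closedBall).diffContOnCl
    rw [hdiff.circleAverage]
    simp [hn]
  have hconj := (conjCLE : ℂ →L[ℝ] ℂ).circleAverage_comp_comm hint₂
  simp only [Function.comp_def, ContinuousLinearEquiv.coe_coe, conjCLE_apply, hvanish,
    map_zero] at hconj
  rw [circleAverage_congr_sphere fun z hz ↦ inv_pow_mul_two_re_eq (hsphere z hz) hr.ne' n (q z),
    circleAverage_fun_add hint₁ hint₃, circleAverage_fun_smul, hconj, smul_zero, add_zero,
    circleAverage_inv_pow_mul_eq_taylorCoeff hr hq]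

theorem norm_taylorCoeff_mul_pow_le_of_re_nonneg_sphere {q : ℂ → ℂ} {r : ℝ} (hr : 0 < r)
    (hq : DifferentiableOn ℂ q (closedBall 0 r)) (hre : ∀ z ∈ sphere (0 : ℂ) r, 0 ≤ (q z).re)
    {n : ℕ} (hn : n ≠ 0) : ‖taylorCoeff q n‖ * r ^ n ≤ 2 * (q 0).re := by
  have hmean : circleAverage (fun z ↦ (q z).re) 0 r = (q 0).re := by
    have hcont : ContinuousOn q (sphere 0 |r|) := by
      rw [abs_of_pos hr]
      exact hq.continuousOn.mono sphere_subset_closedBall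
    have hdiff : DiffContOnCl ℂ q (ball 0 |r|) := by
      rw [abs_of_pos hr]
      exact (hq.mono closure_ball_subset_closedBall).diffContOnCl
    have := reCLM.circleAverage_comp_comm (ContinuousOn.circleIntegrable' hcont)
    simp only [Function.comp_def, reCLM_apply] at this
    rw [this, hdiff.circleAverage]
  have hnorm : Set.EqOn (fun z ↦ ‖(z ^ n)⁻¹ * ((2 * (q z).re : ℝ) : ℂ)‖)
      (fun z ↦ (r ^ n)⁻¹ • (2 : ℝ) • (q z).re) (sphere 0 |r|) := by
    intro z hz
    rw [abs_of_pos hr] at hz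
    have hz' : ‖z‖ = r := by simpa using hz
    simp [hz', abs_of_nonneg (hre z hz)]
  calc ‖taylorCoeff q n‖ * r ^ n
      ≤ circleAverage (fun z ↦ ‖(z ^ n)⁻¹ * ((2 * (q z).re : ℝ) : ℂ)‖) 0 r * r ^ n := by
        rw [← circleAverage_inv_pow_mul_two_re hr hq hn]
        gcongr
        exact norm_circleAverage_le _ _ _
    _ = 2 * (q 0).re := by
        rw [circleAverage_congr_sphere hnorm, circleAverage_fun_smul, circleAverage_fun_smul,
          hmean, smul_eq_mul, smul_eq_mul]
        field_simp

theorem norm_taylorCoeff_mul_pow_le_of_re_nonneg {q : ℂ → ℂ} {R : ℝ} (hR : 0 < R)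
    (hq : DifferentiableOn ℂ q (ball 0 R)) (hre : ∀ z ∈ ball (0 : ℂ) R, 0 ≤ (q z).re)
    {n : ℕ} (hn : n ≠ 0) : ‖taylorCoeff q n‖ * R ^ n ≤ 2 * (q 0).re := by
  have hlim : Tendsto (fun r ↦ ‖taylorCoeff q n‖ * r ^ n) (𝓝[<] R)
      (𝓝 (‖taylorCoeff q n‖ * R ^ n)) :=
    (continuous_const.mul (continuous_pow n)).tendsto R |>.mono_left nhdsWithin_le_nhds
  refine le_of_tendsto hlim ?_
  filter_upwards [Ioo_mem_nhdsLT hR] with r hr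
  exact norm_taylorCoeff_mul_pow_le_of_re_nonneg_sphere hr.1
    (hq.mono (closedBall_subset_ball hr.2))
    (fun z hz ↦ hre z (closedBall_subset_ball hr.2 (sphere_subset_closedBall hz))) hn

theorem taylorCoeff_mul {f g : ℂ → ℂ} (hf : AnalyticAt ℂ f 0) (hg : AnalyticAt ℂ g 0) (n : ℕ) :
    taylorCoeff (f * g) n = ∑ p ∈ antidiagonal n, taylorCoeff f p.1 * taylorCoeff g p.2 := by
  rw [taylorCoeff, iteratedDeriv_mul hf.contDiffAt hg.contDiffAt, Finset.sum_div,
    Nat.sum_antidiagonal_eq_sum_range_succ_mk]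
  refine Finset.sum_congr rfl fun i hi ↦ ?_
  rw [Nat.cast_choose ℂ (by simpa [Nat.lt_succ_iff] using hi), taylorCoeff, taylorCoeff]
  field_simp [Nat.factorial_ne_zero]

theorem taylorCoeff_id_mul_deriv {f : ℂ → ℂ} (hf : AnalyticAt ℂ f 0) (n : ℕ) :
    taylorCoeff (fun z ↦ z * deriv f z) n = n * taylorCoeff f n := by
  rw [show (fun z ↦ z * deriv f z) = id * deriv f from rfl,
    taylorCoeff_mul analyticAt_id hf.deriv]
  rcases n with _ | m
  · simp [taylorCoeff]
  rw [Finset.sum_eq_single (1, m)]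
  · simp [taylorCoeff, iteratedDeriv_succ', Nat.factorial_succ]
    field_simp
  · rintro ⟨i, j⟩ hij hne
    have hi : i ≠ 1 := by
      rintro rfl
      rw [HasAntidiagonal.mem_antidiagonal] at hij
      exact hne (by ext <;> simp; omega)
    simp [taylorCoeff, iteratedDeriv_id, hi]
  · simp [add_comm]

theorem sum_antidiagonal_snd_mul_two (n : ℕ) :
    ∑ p ∈ antidiagonal n, p.2 * 2 = n * (n + 1) := by
  induction n with
  | zero => simp
  | succ n ih =>
    rw [Nat.sum_antidiagonal_succ']
    simp only [add_mul, Finset.sum_add_distrib, ih, Finset.sum_const, Nat.card_antidiagonal]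
    ring

theorem norm_le_of_mul_eq_sum_antidiagonal {𝕜 : Type*} [RCLike 𝕜] {a b : ℕ → 𝕜}
    (ha₀ : a 0 = 0) (ha₁ : a 1 = 1) (hb₀ : b 0 = 1) (hb : ∀ k, k ≠ 0 → ‖b k‖ ≤ 2)
    (hrec : ∀ n, n * a n = ∑ p ∈ antidiagonal n, b p.1 * a p.2) (n : ℕ) : ‖a n‖ ≤ n := by
  induction n using Nat.strong_induction_on with
  | _ n ih =>
  rcases n with _ | _ | m
  · simp [ha₀]
  · simp [ha₁]
  have hsum :
      ((m + 1 : ℕ) : 𝕜) * a (m + 2) = ∑ p ∈ antidiagonal (m + 1), b (p.1 + 1) * a p.2 := by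
    have := hrec (m + 2)
    rw [Nat.sum_antidiagonal_succ, hb₀] at this
    push_cast at this ⊢
    linear_combination this
  have hgauss : ∑ p ∈ antidiagonal (m + 1), (p.2 : ℝ) * 2 = (m + 1) * (m + 2) := by
    exact_mod_cast sum_antidiagonal_snd_mul_two (m + 1)
  have hbound : (m + 1 : ℝ) * ‖a (m + 2)‖ ≤ (m + 1) * (m + 2) := by
    calc (m + 1 : ℝ) * ‖a (m + 2)‖ = ‖∑ p ∈ antidiagonal (m + 1), b (p.1 + 1) * a p.2‖ := by
          rw [← hsum, norm_mul, RCLike.norm_natCast]; push_cast; ring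
      _ ≤ ∑ p ∈ antidiagonal (m + 1), (2 : ℝ) * p.2 := by
          refine (norm_sum_le _ _).trans (Finset.sum_le_sum fun p hp ↦ ?_)
          rw [norm_mul]
          have hp2 : p.2 < m + 2 := by
            have := HasAntidiagonal.mem_antidiagonal.1 hp
            omega
          exact mul_le_mul (hb _ p.1.succ_ne_zero) (ih _ hp2) (norm_nonneg _) zero_le_two
      _ = (m + 1) * (m + 2) := by rw [← hgauss]; simp_rw [mul_comm]
  push_cast
  nlinarith [norm_nonneg (a (m + 2))]

theorem starlike_coeff_bound_general (g q : ℂ → ℂ) (gc : ℕ → ℂ)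
    (hg0 : g 0 = 0)
    (hgc : ∀ z ∈ ball (0:ℂ) 1, HasSum (fun n => gc n * z ^ n) (g z))
    (hgc1 : gc 1 = 1)
    (hq : DifferentiableOn ℂ q (ball 0 1))
    (hqre : ∀ z ∈ ball (0:ℂ) 1, 0 < (q z).re)
    (hq0 : q 0 = 1)
    (hstar : ∀ z ∈ ball (0:ℂ) 1, z * deriv g z = q z * g z) :
    ∀ n, 2 ≤ n → ‖gc n‖ ≤ n := by
  have hgc' := taylorCoeff_eq_of_hasSum one_pos hgc
  have hga : AnalyticAt ℂ g 0 :=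
    (hasFPowerSeriesOnBall_ofScalars_of_hasSum_s10 one_pos hgc).analyticAt
  have hqa : AnalyticAt ℂ q 0 := hq.analyticAt (ball_mem_nhds 0 one_pos)
  have hstar' : (fun z ↦ z * deriv g z) =ᶠ[𝓝 0] q * g :=
    eventually_of_mem (ball_mem_nhds 0 one_pos) hstar
  have hrec (n : ℕ) : (n : ℂ) * gc n = ∑ p ∈ antidiagonal n, taylorCoeff q p.1 * gc p.2 := by
    calc (n : ℂ) * gc n = taylorCoeff (fun z ↦ z * deriv g z) n := by
          rw [taylorCoeff_id_mul_deriv hga, hgc']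
      _ = taylorCoeff (q * g) n := by rw [taylorCoeff, taylorCoeff, hstar'.iteratedDeriv_eq]
      _ = _ := by simp only [taylorCoeff_mul hqa hga, hgc']
  have hcarath (k : ℕ) (hk : k ≠ 0) : ‖taylorCoeff q k‖ ≤ 2 := by
    simpa [hq0] using norm_taylorCoeff_mul_pow_le_of_re_nonneg one_pos hq
      (fun z hz ↦ (hqre z hz).le) hk
  intro n _
  refine norm_le_of_mul_eq_sum_antidiagonal ?_ hgc1 (by simp [taylorCoeff, hq0]) hcarath hrec n
  simpa [← hgc', taylorCoeff] using hg0

theorem starlike_coeff_bound (g q : ℂ → ℂ) (gc : ℕ → ℂ)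
    (hg : DifferentiableOn ℂ g (ball 0 1))
    (hinj : Set.InjOn g (ball 0 1))
    (hg0 : g 0 = 0) (hg'0 : deriv g 0 = 1)
    (hgc : ∀ z ∈ ball (0:ℂ) 1, HasSum (fun n => gc n * z ^ n) (g z))
    (hgc1 : gc 1 = 1)
    (hq : DifferentiableOn ℂ q (ball 0 1))
    (hqre : ∀ z ∈ ball (0:ℂ) 1, 0 < (q z).re)
    (hq0 : q 0 = 1)
    (hstar : ∀ z ∈ ball (0:ℂ) 1, z * deriv g z = q z * g z) :
    ∀ n, 2 ≤ n → ‖gc n‖ ≤ n :=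
  starlike_coeff_bound_general g q gc hg0 hgc hgc1 hq hqre hq0 hstar
end
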